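/- arXiv:2003.11286 — 4 statements merged into one kernel-verified Lean document; each statement's English description precedes it below -/
import Mathlib

section
/- Let R be an integral domain and let W : ℤ² → R be an elliptic net with W(0,0) = 0. Then W(−a,−b) = −W(a,b) for all (a,b) ∈ ℤ². -/
/-- An elliptic net of rank 2: a map `W : ℤ² → R` satisfying the four-term recurrence. -/
def IsEllipticNetRank2 {R : Type*} [CommRing R] (W : ℤ × ℤ → R) : Prop :=
  ∀ p q r s : ℤ × ℤ,
    W (p + q + s) * W (p - q) * W (r + s) * W r +
      W (q + r + s) * W (q - r) * W (p + s) * W p +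
        W (r + p + s) * W (r - p) * W (q + s) * W q = 0

namespace IsEllipticNetRank2

variable {R : Type*} [CommRing R] {W : ℤ × ℤ → R}

theorem pow_three_mul_add_neg_eq_zero (hW : IsEllipticNetRank2 W) (h0 : W 0 = 0)
    (v : ℤ × ℤ) : W v ^ 3 * (W v + W (-v)) = 0 := by
  have h := hW v v 0 0
  simp only [add_zero, sub_self, sub_zero, zero_sub, h0, mul_zero, zero_add] at h
  linear_combination h

theorem map_neg [IsDomain R] (hW : IsEllipticNetRank2 W) (h0 : W 0 = 0) (v : ℤ × ℤ) :
    W (-v) = -W v := by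
  have hv := hW.pow_three_mul_add_neg_eq_zero h0 v
  have hnegv := hW.pow_three_mul_add_neg_eq_zero h0 (-v)
  rw [neg_neg] at hnegv
  rcases mul_eq_zero.mp hv with hcube | hsum
  · have hWv : W v = 0 := pow_eq_zero_iff (by norm_num) |>.mp hcube
    rw [hWv, add_zero, ← pow_succ] at hnegv
    rw [hWv, neg_zero, pow_eq_zero_iff (by norm_num) |>.mp hnegv]
  · linear_combination hsum

end IsEllipticNetRank2

theorem ellipticNet_neg {R : Type*} [CommRing R] [IsDomain R]
    (W : ℤ × ℤ → R) (hW : IsEllipticNetRank2 W) (h0 : W (0, 0) = 0) :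
    ∀ a b : ℤ, W (-a, -b) = - W (a, b) :=
  fun a b => hW.map_neg h0 (a, b)
end

section
/- Let R be an integral domain and let W : ℤ² → R be an elliptic net with W(0,0) = 0, W(1,0) = 1 and W(0,1) = 1. Then for every k ∈ ℤ, W(1,1)·W(2k−1,1) = W(k+1,1)·W(k−1,1)·W(k−1,0)² − W(k,0)·W(k−2,0)·W(k,1)². -/
/-!
Specialising the recurrence to `p = s = 0` gives `W(e)² · W(q) · (W(-q) + W(q)) = 0`, so in a domain
with `W(1,0) = 1` the net is odd. The identity is then the recurrence at `p = (1,0)`,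
`q = (k-1,0)`, `r = (k,1)`, `s = 0`, rewritten with `W(2-k,0) = -W(k-2,0)` and `W(-1,-1) = -W(1,1)`.
-/

/-- An elliptic net of rank 2: a map `W : ℤ² → R` satisfying the four-term recurrence. -/
def IsEllipticNetRankTwo {R : Type*} [CommRing R] (W : ℤ × ℤ → R) : Prop :=
  ∀ p q r s : ℤ × ℤ,
    W (p + q + s) * W (p - q) * W (r + s) * W r +
      W (q + r + s) * W (q - r) * W (p + s) * W p +
        W (r + p + s) * W (r - p) * W (q + s) * W q = 0

namespace IsEllipticNetRankTwo

variable {R : Type*} [CommRing R] {W : ℤ × ℤ → R}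

theorem sq_mul_mul_neg_add_self (hW : IsEllipticNetRankTwo W) (h0 : W 0 = 0) (e q : ℤ × ℤ) :
    W e ^ 2 * (W q * (W (-q) + W q)) = 0 := by
  have h := hW 0 q e 0
  simp only [zero_add, add_zero, zero_sub, sub_zero, h0, mul_zero] at h
  linear_combination h

theorem neg_apply [IsDomain R] (hW : IsEllipticNetRankTwo W) (h0 : W 0 = 0) {e : ℤ × ℤ}
    (he : W e ≠ 0) (q : ℤ × ℤ) : W (-q) = -W q := by
  have hq := (mul_eq_zero.1 (hW.sq_mul_mul_neg_add_self h0 e q)).resolve_left (pow_ne_zero 2 he)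
  have hnq :=
    (mul_eq_zero.1 (hW.sq_mul_mul_neg_add_self h0 e (-q))).resolve_left (pow_ne_zero 2 he)
  rw [neg_neg, add_comm] at hnq
  -- a nonzero `W (-q) + W q` would force `W q = W (-q) = 0` through both products
  by_contra hne
  have hsum : W (-q) + W q ≠ 0 := fun h => hne (eq_neg_of_add_eq_zero_left h)
  have := mul_eq_zero.1 hq
  have := mul_eq_zero.1 hnq
  simp_all

end IsEllipticNetRankTwo

theorem ellipticNet_double_snd_odd_general {R : Type*} [CommRing R] [IsDomain R]
    (W : ℤ × ℤ → R) (hW : IsEllipticNetRankTwo W) (h0 : W (0, 0) = 0)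
    (h10 : W (1, 0) = 1) :
    ∀ k : ℤ, W (1, 1) * W (2 * k - 1, 1) =
      W (k + 1, 1) * W (k - 1, 1) * W (k - 1, 0) ^ 2 -
        W (k, 0) * W (k - 2, 0) * W (k, 1) ^ 2 := by
  intro k
  have hodd := hW.neg_apply h0 (e := (1, 0)) (by simp [h10])
  have h : W (k, 0) * W (-(k - 2, 0)) * W (k, 1) * W (k, 1) +
      W (2 * k - 1, 1) * W (-(1, 1)) * W (1, 0) * W (1, 0) +
        W (k + 1, 1) * W (k - 1, 1) * W (k - 1, 0) * W (k - 1, 0) = 0 := by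
    convert hW (1, 0) (k - 1, 0) (k, 1) 0 using 6
    all_goals (try congr 1) <;> simp <;> ring
  rw [hodd, hodd, h10] at h
  linear_combination -h

theorem ellipticNet_double_snd_odd {R : Type*} [CommRing R] [IsDomain R]
    (W : ℤ × ℤ → R) (hW : IsEllipticNetRankTwo W) (h0 : W (0, 0) = 0)
    (h10 : W (1, 0) = 1) (h01 : W (0, 1) = 1) :
    ∀ k : ℤ, W (1, 1) * W (2 * k - 1, 1) =
      W (k + 1, 1) * W (k - 1, 1) * W (k - 1, 0) ^ 2 -
        W (k, 0) * W (k - 2, 0) * W (k, 1) ^ 2 :=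
  ellipticNet_double_snd_odd_general W hW h0 h10
end

section
/- Let R be an integral domain and let W : ℤ² → R be an elliptic net with W(0,0) = 0, W(1,0) = 1 and W(0,1) = 1. Then for every k ∈ ℤ, W(−1,1)·W(2k+1,1) = W(k−1,1)·W(k+1,1)·W(k+1,0)² − W(k,0)·W(k+2,0)·W(k,1)². -/
/-- An elliptic net of rank 2: a map `W : ℤ² → R` satisfying the four-term recurrence. -/
def IsEllipticNet2 {R : Type*} [CommRing R] (W : ℤ × ℤ → R) : Prop :=
  ∀ p q r s : ℤ × ℤ,
    W (p + q + s) * W (p - q) * W (r + s) * W r +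
      W (q + r + s) * W (q - r) * W (p + s) * W p +
        W (r + p + s) * W (r - p) * W (q + s) * W q = 0

/-! The recurrence at `(p, p, 0, 0)` gives `W(p)³ (W(p) + W(-p)) = 0`, so over a domain a net
vanishing at the origin is odd. The identity is then the recurrence at
`(p, q, r, s) = ((k + 1, 0), (k, 1), (1, 0), 0)`, with `W(1, -1)` and `W(-k, 0)` flipped by
oddness. -/

namespace IsEllipticNet2

variable {R : Type*} [CommRing R] {W : ℤ × ℤ → R}

theorem pow_three_mul_add_apply_neg (hW : IsEllipticNet2 W) (h0 : W 0 = 0) (p : ℤ × ℤ) :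
    W p ^ 3 * (W p + W (-p)) = 0 := by
  have h := hW p p 0 0
  simp only [sub_self, sub_zero, add_zero, zero_add, zero_sub, h0] at h
  linear_combination h

theorem apply_neg [NoZeroDivisors R] (hW : IsEllipticNet2 W) (h0 : W 0 = 0) (p : ℤ × ℤ) :
    W (-p) = -W p := by
  have odd_or_zero : ∀ q, W q = 0 ∨ W (-q) = -W q := fun q => by
    rcases mul_eq_zero.mp (hW.pow_three_mul_add_apply_neg h0 q) with h | h
    · exact .inl (pow_eq_zero_iff three_ne_zero |>.mp h)
    · exact .inr (eq_neg_of_add_eq_zero_right h)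
  rcases odd_or_zero p with hp | hp
  · rcases odd_or_zero (-p) with hp' | hp'
    · rw [hp, hp', neg_zero]
    · rw [neg_neg] at hp'
      linear_combination hp'
  · exact hp

end IsEllipticNet2

theorem ellipticNet_doubleAdd_snd_odd_general {R : Type*} [CommRing R] [IsDomain R]
    (W : ℤ × ℤ → R) (hW : IsEllipticNet2 W) (h0 : W (0, 0) = 0)
    (h10 : W (1, 0) = 1) :
    ∀ k : ℤ, W (-1, 1) * W (2 * k + 1, 1) =
      W (k - 1, 1) * W (k + 1, 1) * W (k + 1, 0) ^ 2 -
        W (k, 0) * W (k + 2, 0) * W (k, 1) ^ 2 := by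
  intro k
  have recurrence := hW (k + 1, 0) (k, 1) (1, 0) 0
  simp only [add_zero, Prod.mk_add_mk, Prod.mk_sub_mk, sub_zero, zero_add, sub_self, h10]
    at recurrence
  have hneg := hW.apply_neg h0
  have neg_one_one : W (1, -1) = -W (-1, 1) := by simpa using hneg (-1, 1)
  have neg_k_zero : W (-k, 0) = -W (k, 0) := by simpa using hneg (k, 0)
  rw [show k + 1 + k = 2 * k + 1 by ring, show k + 1 - k = 1 by ring, zero_sub,
    show 1 + (k + 1) = k + 2 by ring, show 1 - (k + 1) = -k by ring, neg_one_one,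
    neg_k_zero] at recurrence
  linear_combination -recurrence

theorem ellipticNet_doubleAdd_snd_odd {R : Type*} [CommRing R] [IsDomain R]
    (W : ℤ × ℤ → R) (hW : IsEllipticNet2 W) (h0 : W (0, 0) = 0)
    (h10 : W (1, 0) = 1) (h01 : W (0, 1) = 1) :
    ∀ k : ℤ, W (-1, 1) * W (2 * k + 1, 1) =
      W (k - 1, 1) * W (k + 1, 1) * W (k + 1, 0) ^ 2 -
        W (k, 0) * W (k + 2, 0) * W (k, 1) ^ 2 :=
  ellipticNet_doubleAdd_snd_odd_general W hW h0 h10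
end

section
/- Let R be an integral domain and let W : ℤ² → R be an elliptic net with W(0,0) = 0, W(1,0) = 1 and W(0,1) = 1. Then for every k ∈ ℤ, W(−2,1)·W(2k+2,1) = W(k−1,1)·W(k+1,1)·W(k+2,0)² − W(k+1,0)·W(k+3,0)·W(k,1)². -/
/-!
Specialising the recurrence to `r = s = 0` gives `W q ^ 2 * W p * (W p + W (-p)) = 0`, so `W` is
odd as soon as it takes one nonzero value. The identity is then the recurrence at
`p = (k, 1)`, `q = (k + 2, 0)`, `r = (1, 0)`, `s = 0`, with `W (1 - k, -1) = -W (k - 1, 1)`.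
-/

namespace IsEllipticNetRank2

variable {R : Type*} [CommRing R] [IsDomain R] {W : ℤ × ℤ → R}

theorem apply_neg (hW : IsEllipticNetRank2 W) (h0 : W 0 = 0) {q : ℤ × ℤ} (hq : W q ≠ 0)
    (p : ℤ × ℤ) : W (-p) = -W p := by
  have quadratic (p : ℤ × ℤ) : W p * (W p + W (-p)) = 0 := by
    have h := hW p q 0 0
    simp only [add_zero, zero_add, zero_sub, sub_zero, h0, mul_zero] at h
    have h' : W q * W q * (W p * (W p + W (-p))) = 0 := by linear_combination h
    exact (mul_eq_zero.1 h').resolve_left (mul_ne_zero hq hq)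
  rcases mul_eq_zero.1 (quadratic p) with hp | hp
  · have h := quadratic (-p)
    rw [neg_neg, hp, add_zero, mul_self_eq_zero] at h
    rw [h, hp, neg_zero]
  · exact eq_neg_of_add_eq_zero_right hp

end IsEllipticNetRank2

theorem ellipticNet_doubleAdd_snd_even_general {R : Type*} [CommRing R] [IsDomain R]
    (W : ℤ × ℤ → R) (hW : IsEllipticNetRank2 W) (h0 : W (0, 0) = 0)
    (h10 : W (1, 0) = 1) :
    ∀ k : ℤ, W (-2, 1) * W (2 * k + 2, 1) =
      W (k - 1, 1) * W (k + 1, 1) * W (k + 2, 0) ^ 2 -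
        W (k + 1, 0) * W (k + 3, 0) * W (k, 1) ^ 2 := by
  intro k
  have key : W (2 * k + 2, 1) * W (-2, 1) * W (1, 0) * W (1, 0) +
      W (k + 3, 0) * W (k + 1, 0) * W (k, 1) * W (k, 1) +
      W (k + 1, 1) * W (-(k - 1, 1)) * W (k + 2, 0) * W (k + 2, 0) = 0 := by
    convert hW (k, 1) (k + 2, 0) (1, 0) 0 using 6 <;> (try apply congrArg W) <;>
      simp [Prod.ext_iff] <;> ring
  rw [hW.apply_neg h0 (q := (1, 0)) (by simp [h10]), h10] at key
  linear_combination key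

theorem ellipticNet_doubleAdd_snd_even {R : Type*} [CommRing R] [IsDomain R]
    (W : ℤ × ℤ → R) (hW : IsEllipticNetRank2 W) (h0 : W (0, 0) = 0)
    (h10 : W (1, 0) = 1) (h01 : W (0, 1) = 1) :
    ∀ k : ℤ, W (-2, 1) * W (2 * k + 2, 1) =
      W (k - 1, 1) * W (k + 1, 1) * W (k + 2, 0) ^ 2 -
        W (k + 1, 0) * W (k + 3, 0) * W (k, 1) ^ 2 :=
  ellipticNet_doubleAdd_snd_even_general W hW h0 h10
end
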